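/- arXiv:math/0508249 — 2 statements merged into one kernel-verified Lean document; each statement's English description precedes it below -/
import Mathlib

section
/- (Key inequality, Lemma 5.1) Let L = H⊕H⊕Λ as above, let r = (a₁,a₂)(b₁,b₂)(c) ∈ L with (a₁,a₂) ≠ (0,0), and let ω = (τ,1)(u, -τu-(z,z)/2)(z) with τ₂ = Im τ > 0 and 2τ₂u₂+(z₂,z₂) > 0. Set A = ⟨ω,r⟩ and ũ₂ = (2τ₂u₂+(z₂,z₂))/(2τ₂). Then |A| - ⟨r,r⟩·τ₂/(2|a₂τ - a₁|) ≥ |a₂τ - a₁|·ũ₂. -/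
open Complex

/-!
Put `α = a₂τ - a₁`. Expanding in coordinates gives the identity
`2τ₂ · Im(ᾱ A) = (w, w) - τ₂² ⟨r, r⟩ - |α|² (2τ₂u₂ + (z₂, z₂))` with
`w = Im(α) z₁ - Re(α) z₂ - τ₂ c ∈ Λ ⊗ ℝ`. Since `Λ` is negative definite, `(w, w) ≤ 0`, and
`-Im(ᾱ A) ≤ |α| |A|`; dividing by `2τ₂|α| > 0` gives the inequality.
-/

/-- The ℂ-bilinear extension of the form on `Λ` (given by the real matrix `G`)
to `Λ ⊗ ℂ ≅ ℂ¹⁶`. -/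
noncomputable def pairC (G : Matrix (Fin 16) (Fin 16) ℝ) (x y : Fin 16 → ℂ) : ℂ :=
  ∑ i : Fin 16, ∑ j : Fin 16, (G i j : ℂ) * x i * y j

/-- The real form on `Λ ⊗ ℝ ≅ ℝ¹⁶` given by `G`. -/
noncomputable def pairR (G : Matrix (Fin 16) (Fin 16) ℝ) (x y : Fin 16 → ℝ) : ℝ :=
  ∑ i : Fin 16, ∑ j : Fin 16, G i j * x i * y j

/-- The ℂ-bilinear pairing on `L ⊗ ℂ` where `L = H ⊕ H ⊕ Λ`: an element
`(a₁,a₂)(b₁,b₂)(c)` denotes `a₁x₁+a₂x₂+b₁y₁+b₂y₂+c`, and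
`⟨(a₁,a₂)(b₁,b₂)(c),(a₁',a₂')(b₁',b₂')(c')⟩ = a₁b₁'+a₂b₂'+b₁a₁'+b₂a₂'+(c,c')`. -/
noncomputable def pairL (G : Matrix (Fin 16) (Fin 16) ℝ)
    (a₁ a₂ b₁ b₂ : ℂ) (c : Fin 16 → ℂ)
    (a₁' a₂' b₁' b₂' : ℂ) (c' : Fin 16 → ℂ) : ℂ :=
  a₁ * b₁' + a₂ * b₂' + b₁ * a₁' + b₂ * a₂' + pairC G c c'


section Forms

variable (G : Matrix (Fin 16) (Fin 16) ℝ)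

lemma pairR_eq_toBilin' (x y : Fin 16 → ℝ) : pairR G x y = Matrix.toBilin' G x y := by
  simp only [pairR, Matrix.toBilin'_apply]
  exact Finset.sum_congr rfl fun i _ => Finset.sum_congr rfl fun j _ => by ring

lemma pairR_comm (hsym : ∀ i j, G i j = G j i) (x y : Fin 16 → ℝ) :
    pairR G x y = pairR G y x := by
  rw [pairR, Finset.sum_comm]
  exact Finset.sum_congr rfl fun i _ => Finset.sum_congr rfl fun j _ => by rw [hsym j i]; ring

lemma re_pairC_self (x : Fin 16 → ℂ) :
    (pairC G x x).re = pairR G (fun i => (x i).re) (fun i => (x i).re)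
      - pairR G (fun i => (x i).im) (fun i => (x i).im) := by
  simp only [pairC, pairR, re_sum, mul_re, mul_im, ofReal_re, ofReal_im, ← Finset.sum_sub_distrib]
  exact Finset.sum_congr rfl fun i _ => Finset.sum_congr rfl fun j _ => by ring

lemma im_pairC (x y : Fin 16 → ℂ) :
    (pairC G x y).im = pairR G (fun i => (x i).re) (fun i => (y i).im)
      + pairR G (fun i => (x i).im) (fun i => (y i).re) := by
  simp only [pairC, pairR, im_sum, mul_re, mul_im, ofReal_re, ofReal_im, ← Finset.sum_add_distrib]
  exact Finset.sum_congr rfl fun i _ => Finset.sum_congr rfl fun j _ => by ring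

lemma re_pairC_ofReal_right (x : Fin 16 → ℂ) (c : Fin 16 → ℝ) :
    (pairC G x (fun i => (c i : ℂ))).re = pairR G (fun i => (x i).re) c := by
  simp [pairC, pairR, re_sum, mul_re]

lemma im_pairC_ofReal_right (x : Fin 16 → ℂ) (c : Fin 16 → ℝ) :
    (pairC G x (fun i => (c i : ℂ))).im = pairR G (fun i => (x i).im) c := by
  simp [pairC, pairR, im_sum, mul_im]

lemma im_pairC_self (hsym : ∀ i j, G i j = G j i) (x : Fin 16 → ℂ) :
    (pairC G x x).im = 2 * pairR G (fun i => (x i).re) (fun i => (x i).im) := by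
  rw [im_pairC, pairR_comm G hsym (fun i => (x i).im)]
  ring

lemma pairR_smul_sub_smul_sub_smul_self (hsym : ∀ i j, G i j = G j i) (s t r : ℝ)
    (x y v : Fin 16 → ℝ) :
    pairR G (s • x - t • y - r • v) (s • x - t • y - r • v)
      = s ^ 2 * pairR G x x + t ^ 2 * pairR G y y + r ^ 2 * pairR G v v
        - 2 * s * t * pairR G x y - 2 * s * r * pairR G x v + 2 * t * r * pairR G y v := by
  rw [pairR_eq_toBilin']
  simp only [map_sub, map_smul, LinearMap.sub_apply, LinearMap.smul_apply, smul_eq_mul,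
    ← pairR_eq_toBilin']
  rw [pairR_comm G hsym y x, pairR_comm G hsym v x, pairR_comm G hsym v y]
  ring

lemma pairR_self_nonpos (hneg : ∀ v : Fin 16 → ℝ, v ≠ 0 → pairR G v v < 0) (v : Fin 16 → ℝ) :
    pairR G v v ≤ 0 := by
  rcases eq_or_ne v 0 with rfl | hv
  · simp [pairR]
  · exact (hneg v hv).le

end Forms

open ComplexConjugate

lemma ofReal_mul_sub_ofReal_ne_zero {a₁ a₂ : ℝ} (ha : ¬(a₁ = 0 ∧ a₂ = 0)) {τ : ℂ}
    (hτ : 0 < τ.im) : (a₂ : ℂ) * τ - a₁ ≠ 0 := by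
  intro h
  have ha₂ : a₂ = 0 := by simpa [hτ.ne'] using congrArg im h
  exact ha ⟨by simpa [ha₂] using congrArg re h, ha₂⟩

lemma mul_div_le_sub_div_of_sq_mul_add_sq_mul_le {t m R N X : ℝ} (ht : 0 < t) (hm : 0 < m)
    (h : t ^ 2 * R + m ^ 2 * N ≤ 2 * t * m * X) : m * (N / (2 * t)) ≤ X - R * t / (2 * m) := by
  have key : m * (N / (2 * t)) + R * t / (2 * m) = (t ^ 2 * R + m ^ 2 * N) / (2 * t * m) := by
    field_simp
    ring
  rw [le_sub_iff_add_le, key, div_le_iff₀ (by positivity)]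
  linarith

lemma two_mul_im_conj_mul_pairL (G : Matrix (Fin 16) (Fin 16) ℝ) (hsym : ∀ i j, G i j = G j i)
    (a₁ a₂ b₁ b₂ : ℝ) (c : Fin 16 → ℝ) (τ u : ℂ) (z : Fin 16 → ℂ) :
    2 * τ.im * (conj ((a₂ : ℂ) * τ - a₁)
        * pairL G τ 1 u (-τ * u - pairC G z z / 2) z a₁ a₂ b₁ b₂ (fun i => (c i : ℂ))).im
      = pairR G ((a₂ * τ.im) • (fun i => (z i).re) - (a₂ * τ.re - a₁) • (fun i => (z i).im)
            - τ.im • c)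
          ((a₂ * τ.im) • (fun i => (z i).re) - (a₂ * τ.re - a₁) • (fun i => (z i).im)
            - τ.im • c)
        - τ.im ^ 2 * (2 * (a₁ * b₁ + a₂ * b₂) + pairR G c c)
        - normSq ((a₂ : ℂ) * τ - a₁)
          * (2 * τ.im * u.im + pairR G (fun i => (z i).im) (fun i => (z i).im)) := by
  rw [pairR_smul_sub_smul_sub_smul_self G hsym]
  simp only [pairL, mul_im, mul_re, conj_re, conj_im, add_re, add_im, sub_re, sub_im, neg_re,
    neg_im, div_ofNat_re, div_ofNat_im, ofReal_re, ofReal_im, one_re, one_im, re_pairC_self,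
    im_pairC_self G hsym, re_pairC_ofReal_right, im_pairC_ofReal_right, normSq_apply]
  ring

theorem stmt12_general (G : Matrix (Fin 16) (Fin 16) ℝ)
    (hsym : ∀ i j, G i j = G j i)
    (hneg : ∀ v : Fin 16 → ℝ, v ≠ 0 → pairR G v v < 0)
    (a₁ a₂ b₁ b₂ : ℤ) (c : Fin 16 → ℤ) (ha : ¬(a₁ = 0 ∧ a₂ = 0))
    (τ u : ℂ) (z : Fin 16 → ℂ) (hτ : 0 < τ.im) :
    ‖(a₂ : ℂ) * τ - (a₁ : ℂ)‖
        * ((2 * τ.im * u.im + pairR G (fun i => (z i).im) (fun i => (z i).im))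
            / (2 * τ.im))
      ≤ ‖pairL G τ 1 u (-τ * u - pairC G z z / 2) z
            (a₁ : ℂ) (a₂ : ℂ) (b₁ : ℂ) (b₂ : ℂ) (fun i => (c i : ℂ))‖
        - (2 * ((a₁ : ℝ) * b₁ + (a₂ : ℝ) * b₂)
            + pairR G (fun i => (c i : ℝ)) (fun i => (c i : ℝ))) * τ.im
          / (2 * ‖(a₂ : ℂ) * τ - (a₁ : ℂ)‖) := by
  set α : ℂ := (a₂ : ℂ) * τ - a₁
  set A := pairL G τ 1 u (-τ * u - pairC G z z / 2) z a₁ a₂ b₁ b₂ (fun i => (c i : ℂ))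
  have hα : α ≠ 0 := by
    simpa using ofReal_mul_sub_ofReal_ne_zero (a₁ := a₁) (a₂ := a₂) (by exact_mod_cast ha) hτ
  have hid := two_mul_im_conj_mul_pairL G hsym a₁ a₂ b₁ b₂ (fun i => c i) τ u z
  simp only [ofReal_intCast, normSq_eq_norm_sq] at hid
  have hw := pairR_self_nonpos G hneg
    ((a₂ * τ.im) • (fun i => (z i).re) - (a₂ * τ.re - a₁) • (fun i => (z i).im)
      - τ.im • (fun i => (c i : ℝ)))
  have hA : -(conj α * A).im ≤ ‖α‖ * ‖A‖ := by
    simpa using neg_le_of_abs_le (abs_im_le_norm (conj α * A))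
  refine mul_div_le_sub_div_of_sq_mul_add_sq_mul_le hτ (norm_pos_iff.mpr hα) ?_
  linarith [mul_le_mul_of_nonneg_left hA (by positivity : (0 : ℝ) ≤ 2 * τ.im)]

/-- Key inequality (Lemma 5.1): for `r = (a₁,a₂)(b₁,b₂)(c) ∈ L` with
`(a₁,a₂) ≠ (0,0)` and `ω = (τ,1)(u,-τu-(z,z)/2)(z)` with `τ₂ > 0` and
`2τ₂u₂+(z₂,z₂) > 0`, setting `A = ⟨ω,r⟩` and `ũ₂ = (2τ₂u₂+(z₂,z₂))/(2τ₂)`,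
one has `|A| - ⟨r,r⟩τ₂/(2|a₂τ-a₁|) ≥ |a₂τ-a₁|·ũ₂`. -/
theorem stmt12 (G : Matrix (Fin 16) (Fin 16) ℝ)
    (hsym : ∀ i j, G i j = G j i)
    (hneg : ∀ v : Fin 16 → ℝ, v ≠ 0 → pairR G v v < 0)
    (a₁ a₂ b₁ b₂ : ℤ) (c : Fin 16 → ℤ) (ha : ¬(a₁ = 0 ∧ a₂ = 0))
    (τ u : ℂ) (z : Fin 16 → ℂ) (hτ : 0 < τ.im)
    (hu : 0 < 2 * τ.im * u.im + pairR G (fun i => (z i).im) (fun i => (z i).im)) :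
    ‖(a₂ : ℂ) * τ - (a₁ : ℂ)‖
        * ((2 * τ.im * u.im + pairR G (fun i => (z i).im) (fun i => (z i).im))
            / (2 * τ.im))
      ≤ ‖pairL G τ 1 u (-τ * u - pairC G z z / 2) z
            (a₁ : ℂ) (a₂ : ℂ) (b₁ : ℂ) (b₂ : ℂ) (fun i => (c i : ℂ))‖
        - (2 * ((a₁ : ℝ) * b₁ + (a₂ : ℝ) * b₂)
            + pairR G (fun i => (c i : ℝ)) (fun i => (c i : ℝ))) * τ.im
          / (2 * ‖(a₂ : ℂ) * τ - (a₁ : ℂ)‖) :=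
  stmt12_general G hsym hneg a₁ a₂ b₁ b₂ c ha τ u z hτ
end

section
/- (Refined inequality, Remark 5.2) Under the hypotheses of the key inequality (r = (a₁,a₂)(b₁,b₂)(c) with (a₁,a₂) ≠ (0,0), ω in tube coordinates (τ,u,z), τ₂ > 0, ũ₂ > 0), one has |Im(⟨ω,r⟩/(a₂τ - a₁))| - ⟨r,r⟩τ₂/(2|a₂τ-a₁|²) ≥ ũ₂. -/
open Complex

lemma pairR_symm (G : Matrix (Fin 16) (Fin 16) ℝ) (hsym : ∀ i j, G i j = G j i)
    (x y : Fin 16 → ℝ) : pairR G x y = pairR G y x := by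
  unfold pairR
  rw [Finset.sum_comm]
  exact Finset.sum_congr rfl fun i _ => Finset.sum_congr rfl fun j _ => by
    rw [hsym]; ring

lemma pairC_re (G : Matrix (Fin 16) (Fin 16) ℝ) (x y : Fin 16 → ℂ) :
    (pairC G x y).re = pairR G (fun i => (x i).re) (fun i => (y i).re)
      - pairR G (fun i => (x i).im) (fun i => (y i).im) := by
  unfold pairC pairR
  rw [Complex.re_sum, ← Finset.sum_sub_distrib]
  refine Finset.sum_congr rfl fun i _ => ?_
  rw [Complex.re_sum, ← Finset.sum_sub_distrib]
  refine Finset.sum_congr rfl fun j _ => ?_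
  simp [Complex.mul_re, Complex.mul_im]

lemma pairC_im (G : Matrix (Fin 16) (Fin 16) ℝ) (x y : Fin 16 → ℂ) :
    (pairC G x y).im = pairR G (fun i => (x i).re) (fun i => (y i).im)
      + pairR G (fun i => (x i).im) (fun i => (y i).re) := by
  unfold pairC pairR
  rw [Complex.im_sum, ← Finset.sum_add_distrib]
  refine Finset.sum_congr rfl fun i _ => ?_
  rw [Complex.im_sum, ← Finset.sum_add_distrib]
  refine Finset.sum_congr rfl fun j _ => ?_
  simp [Complex.mul_re, Complex.mul_im]

lemma pairR_left_comb (G : Matrix (Fin 16) (Fin 16) ℝ) (α β γ : ℝ)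
    (x y w q : Fin 16 → ℝ) :
    pairR G (fun i => α * x i + β * y i + γ * w i) q
      = α * pairR G x q + β * pairR G y q + γ * pairR G w q := by
  unfold pairR
  rw [Finset.mul_sum, Finset.mul_sum, Finset.mul_sum, ← Finset.sum_add_distrib,
    ← Finset.sum_add_distrib]
  refine Finset.sum_congr rfl fun i _ => ?_
  rw [Finset.mul_sum, Finset.mul_sum, Finset.mul_sum, ← Finset.sum_add_distrib,
    ← Finset.sum_add_distrib]
  exact Finset.sum_congr rfl fun j _ => by ring

lemma pairR_lin (G : Matrix (Fin 16) (Fin 16) ℝ) (hsym : ∀ i j, G i j = G j i)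
    (α β γ : ℝ) (x y w : Fin 16 → ℝ) :
    pairR G (fun i => α * x i + β * y i + γ * w i)
          (fun i => α * x i + β * y i + γ * w i)
      = α^2 * pairR G x x + β^2 * pairR G y y + γ^2 * pairR G w w
        + 2*α*β * pairR G x y + 2*α*γ * pairR G x w + 2*β*γ * pairR G y w := by
  have hR : ∀ p : Fin 16 → ℝ,
      pairR G p (fun i => α * x i + β * y i + γ * w i)
        = α * pairR G p x + β * pairR G p y + γ * pairR G p w := by
    intro p
    rw [pairR_symm G hsym, pairR_left_comb, pairR_symm G hsym x p,
      pairR_symm G hsym y p, pairR_symm G hsym w p]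
  rw [pairR_left_comb, hR x, hR y, hR w, pairR_symm G hsym y x,
    pairR_symm G hsym w x, pairR_symm G hsym w y]
  ring

lemma arith_final (p m r n t A : ℝ) (hn : 0 < n) (ht : 0 < t)
    (h1 : p * n ≤ -r * t ^ 2 - 2 * t * m) (habs : -m / n ≤ A) :
    p / (2 * t) ≤ A - r * t / (2 * n) := by
  have h2 : p / (2 * t) ≤ -m / n - r * t / (2 * n) := by
    have hset : -m / n - r * t / (2 * n) = (-2 * m - r * t) / (2 * n) := by
      field_simp
    rw [hset, div_le_div_iff₀ (by linarith) (by linarith)]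
    nlinarith
  linarith

set_option maxHeartbeats 1000000 in
/-- Refined inequality (Remark 5.2): under the hypotheses of the key inequality,
`|Im(⟨ω,r⟩/(a₂τ - a₁))| - ⟨r,r⟩τ₂/(2|a₂τ-a₁|²) ≥ ũ₂`. -/
theorem stmt13 (G : Matrix (Fin 16) (Fin 16) ℝ)
    (hsym : ∀ i j, G i j = G j i)
    (hneg : ∀ v : Fin 16 → ℝ, v ≠ 0 → pairR G v v < 0)
    (a₁ a₂ b₁ b₂ : ℤ) (c : Fin 16 → ℤ) (ha : ¬(a₁ = 0 ∧ a₂ = 0))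
    (τ u : ℂ) (z : Fin 16 → ℂ) (hτ : 0 < τ.im)
    (hu : 0 < 2 * τ.im * u.im + pairR G (fun i => (z i).im) (fun i => (z i).im)) :
    (2 * τ.im * u.im + pairR G (fun i => (z i).im) (fun i => (z i).im))
        / (2 * τ.im)
      ≤ |(pairL G τ 1 u (-τ * u - pairC G z z / 2) z
            (a₁ : ℂ) (a₂ : ℂ) (b₁ : ℂ) (b₂ : ℂ) (fun i => (c i : ℂ))
            / ((a₂ : ℂ) * τ - (a₁ : ℂ))).im|
        - (2 * ((a₁ : ℝ) * b₁ + (a₂ : ℝ) * b₂)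
            + pairR G (fun i => (c i : ℝ)) (fun i => (c i : ℝ))) * τ.im
          / (2 * Complex.normSq ((a₂ : ℂ) * τ - (a₁ : ℂ))) := by
  set zr : Fin 16 → ℝ := fun i => (z i).re with hzr
  set zi : Fin 16 → ℝ := fun i => (z i).im with hzi
  set cr : Fin 16 → ℝ := fun i => (c i : ℝ) with hcr
  set D : ℂ := (a₂ : ℂ) * τ - (a₁ : ℂ) with hD
  set S : ℂ := pairL G τ 1 u (-τ * u - pairC G z z / 2) z
      (a₁ : ℂ) (a₂ : ℂ) (b₁ : ℂ) (b₂ : ℂ) (fun i => (c i : ℂ)) with hS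
  -- D ≠ 0
  have hDne : D ≠ 0 := by
    intro h
    rcases eq_or_ne a₂ 0 with h2 | h2
    · have h1 : a₁ ≠ 0 := fun h1 => ha ⟨h1, h2⟩
      rw [hD, h2] at h
      simp at h
      exact h1 (by exact_mod_cast h)
    · have : D.im = (a₂ : ℝ) * τ.im := by
        simp [hD, Complex.mul_im]
      rw [h] at this
      have ha2 : (a₂ : ℝ) ≠ 0 := Int.cast_ne_zero.mpr h2
      have := this.symm
      simp [Complex.zero_im] at this
      rcases this with h' | h'
      · exact h2 h'
      · exact hτ.ne' h'
  have hnD : 0 < Complex.normSq D := Complex.normSq_pos.mpr hDne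
  -- the w-vector
  set wv : Fin 16 → ℝ := fun i =>
      (-(a₂ : ℝ) * τ.im) * zr i + ((a₂ : ℝ) * τ.re - (a₁ : ℝ)) * zi i + τ.im * cr i with hwv
  have hww : pairR G wv wv ≤ 0 := by
    rcases eq_or_ne wv 0 with h | h
    · rw [h]; simp [pairR]
    · exact (hneg wv h).le
  have hwwval := pairR_lin G hsym (-(a₂ : ℝ) * τ.im) ((a₂ : ℝ) * τ.re - (a₁ : ℝ)) τ.im zr zi cr
  -- pairC facts
  have hQre : (pairC G z z).re = pairR G zr zr - pairR G zi zi := pairC_re G z z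
  have hQim : (pairC G z z).im = 2 * pairR G zr zi := by
    rw [pairC_im G z z, pairR_symm G hsym zi zr]; ring
  have hcre : ∀ i, ((fun i => ((c i : ℂ))) i).re = cr i := fun i => by simp [hcr]
  have hcim : ∀ i, ((fun i => ((c i : ℂ))) i).im = 0 := fun i => by simp
  have hPzero : ∀ x : Fin 16 → ℝ, pairR G x (fun _ => 0) = 0 := fun x => by simp [pairR]
  have hPcre : (pairC G z (fun i => ((c i : ℂ)))).re = pairR G zr cr := by
    rw [pairC_re]
    simp only [hcre, hcim]
    rw [hPzero]; ring
  have hPcim : (pairC G z (fun i => ((c i : ℂ)))).im = pairR G zi cr := by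
    rw [pairC_im]
    simp only [hcre, hcim]
    rw [hPzero]; ring
  -- re and im of S
  have hSre : S.re = τ.re * (b₁ : ℝ) + (b₂ : ℝ) + u.re * (a₁ : ℝ)
      - (a₂ : ℝ) * (τ.re * u.re - τ.im * u.im)
      - (a₂ : ℝ) * (pairR G zr zr - pairR G zi zi) / 2 + pairR G zr cr := by
    rw [hS]
    unfold pairL
    simp only [Complex.add_re, Complex.mul_re, Complex.sub_re, Complex.neg_re,
      Complex.div_re, Complex.one_re, Complex.one_im, Complex.intCast_re,
      Complex.intCast_im, Complex.mul_im, Complex.sub_im, Complex.neg_im,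
      Complex.div_im, hQre, hQim, hPcre]
    simp [Complex.normSq]
    ring
  have hSim : S.im = τ.im * (b₁ : ℝ) + u.im * (a₁ : ℝ)
      - (a₂ : ℝ) * (τ.re * u.im + τ.im * u.re)
      - (a₂ : ℝ) * pairR G zr zi + pairR G zi cr := by
    rw [hS]
    unfold pairL
    simp only [Complex.add_im, Complex.mul_im, Complex.sub_im, Complex.neg_im,
      Complex.div_im, Complex.one_re, Complex.one_im, Complex.intCast_re,
      Complex.intCast_im, Complex.mul_re, Complex.sub_re, Complex.neg_re,
      Complex.div_re, hQim, hQre, hPcim]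
    simp [Complex.normSq]
    ring
  have hDre : D.re = (a₂ : ℝ) * τ.re - (a₁ : ℝ) := by
    simp [hD, Complex.sub_re, Complex.mul_re]
  have hDim : D.im = (a₂ : ℝ) * τ.im := by
    simp [hD, Complex.sub_im, Complex.mul_im]
  have hnDval : Complex.normSq D = D.re ^ 2 + D.im ^ 2 := by
    rw [Complex.normSq_apply]; ring
  -- master identity
  set P : ℝ := 2 * τ.im * u.im + pairR G zi zi with hP
  set R : ℝ := 2 * ((a₁ : ℝ) * b₁ + (a₂ : ℝ) * b₂) + pairR G cr cr with hR
  set M : ℝ := S.im * D.re - S.re * D.im with hM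
  have key : P * Complex.normSq D
      = -R * τ.im ^ 2 - 2 * τ.im * M + pairR G wv wv := by
    rw [hwwval, hM, hSre, hSim, hDre, hDim, hnDval, hDre, hDim, hP, hR]
    ring
  -- Im of the quotient
  have hdiv : (S / D).im = M / Complex.normSq D := by
    rw [Complex.div_im, hM]
    ring
  have habs : -M / Complex.normSq D ≤ |(S / D).im| := by
    rw [hdiv]
    calc -M / Complex.normSq D = -(M / Complex.normSq D) := by ring
    _ ≤ |M / Complex.normSq D| := neg_le_abs _
  -- finish
  have h1 : P * Complex.normSq D ≤ -R * τ.im ^ 2 - 2 * τ.im * M := by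
    linarith [key, hww]
  show P / (2 * τ.im) ≤ |(S / D).im| - R * τ.im / (2 * Complex.normSq D)
  exact arith_final P M R (Complex.normSq D) τ.im |(S / D).im| hnD hτ h1 habs
end
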